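/- For every i ∈ {κ, …, n−2}, one has bar-α_i · ρ_{i+1} ≤ 1. -/
import Mathlib


open Finset

/-- `rhoProd ρ k j = ∏_{i=k+1}^{j} ρ i`. -/
noncomputable def rhoProd (ρ : ℕ → ℝ) (k j : ℕ) : ℝ := ∏ i ∈ Finset.Icc (k + 1) j, ρ i

/-- `k` is a binding index: `k ∈ {κ+1, …, n-1}` and `ρ_{k,j} < 1` for all `j ∈ {k+1, …, n-1}`. -/
def Binding (ρ : ℕ → ℝ) (n κ k : ℕ) : Prop :=
  κ + 1 ≤ k ∧ k ≤ n - 1 ∧ ∀ j, k + 1 ≤ j → j ≤ n - 1 → rhoProd ρ k j < 1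

/-- `kmin ρ n κ i = min {k ∈ H : k ≥ i}`, the smallest binding index `≥ i`. -/
noncomputable def kmin (ρ : ℕ → ℝ) (n κ i : ℕ) : ℕ :=
  sInf {k | Binding ρ n κ k ∧ i ≤ k}

/-- `bar-α_i`: equals `α i` for `i ≤ κ` and `(ρ_{i, k(i)})⁻¹` for `i > κ`. -/
noncomputable def barAlpha (ρ α : ℕ → ℝ) (n κ i : ℕ) : ℝ :=
  if i ≤ κ then α i else (rhoProd ρ i (kmin ρ n κ i))⁻¹

private lemma rhoProd_pos' (n : ℕ) (ρ : ℕ → ℝ) (hρ : ∀ i, 1 ≤ i → i ≤ n → 0 < ρ i)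
    (k j : ℕ) (hj : j ≤ n) : 0 < rhoProd ρ k j := by
  refine Finset.prod_pos fun i hi => ?_
  rw [Finset.mem_Icc] at hi
  exact hρ i (by omega) (by omega)

private lemma rhoProd_mul (ρ : ℕ → ℝ) (a b c : ℕ) (hab : a ≤ b) (hbc : b ≤ c) :
    rhoProd ρ a b * rhoProd ρ b c = rhoProd ρ a c := by
  unfold rhoProd
  rw [Finset.Icc_add_one_left_eq_Ioc, Finset.Icc_add_one_left_eq_Ioc, Finset.Icc_add_one_left_eq_Ioc]
  exact Finset.prod_Ioc_consecutive _ hab hbc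

private lemma rhoProd_self (ρ : ℕ → ℝ) (k : ℕ) : rhoProd ρ k k = 1 := by
  simp [rhoProd, Finset.Icc_eq_empty (by omega : ¬ k + 1 ≤ k)]

theorem stmt6 (n : ℕ) (hn : 2 ≤ n) (ρ α : ℕ → ℝ)
    (hρ : ∀ i, 1 ≤ i → i ≤ n → 0 < ρ i)
    (hα0pos : 0 < α 0) (hα0le : α 0 ≤ 1)
    (hrec : ∀ k, 1 ≤ k → k ≤ n → α k = min (α (k - 1) * ρ k) 1)
    (κ : ℕ) (hκle : κ ≤ n - 1) (hκ1 : α κ = 1)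
    (hκmax : ∀ k, k ≤ n - 1 → α k = 1 → k ≤ κ) :
    ∀ i, κ ≤ i → i ≤ n - 2 → barAlpha ρ α n κ i * ρ (i + 1) ≤ 1 := by
  intro i hκi hin2
  rcases eq_or_lt_of_le hκi with rfl | hlt
  · -- i = κ
    rw [barAlpha, if_pos le_rfl, hκ1, one_mul]
    by_contra h
    push_neg at h
    have h1 : α (κ + 1) = 1 := by
      have hr := hrec (κ + 1) (by omega) (by omega)
      simp only [Nat.add_sub_cancel, hκ1, one_mul] at hr
      rw [hr, min_eq_right h.le]
    have := hκmax (κ + 1) (by omega) h1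
    omega
  · -- κ < i
    have hik : ¬ i ≤ κ := by omega
    rw [barAlpha, if_neg hik]
    set K := kmin ρ n κ i with hKdef
    have hne : ({k | Binding ρ n κ k ∧ i ≤ k} : Set ℕ).Nonempty := by
      refine ⟨n - 1, ⟨⟨by omega, le_rfl, fun j hj1 hj2 => ?_⟩, by omega⟩⟩
      omega
    have hKmem : Binding ρ n κ K ∧ i ≤ K := Nat.sInf_mem hne
    obtain ⟨hKb, hiK⟩ := hKmem
    obtain ⟨hKκ, hKn, hKlt⟩ := hKb
    -- Claim: for i ≤ j ≤ K, 1 ≤ rhoProd ρ j K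
    have claim : ∀ d j, i ≤ j → j ≤ K → K - j ≤ d → 1 ≤ rhoProd ρ j K := by
      intro d
      induction d with
      | zero =>
        intro j hij hjK hd
        have : j = K := by omega
        rw [this, rhoProd_self]
      | succ d ih =>
        intro j hij hjK hd
        rcases eq_or_lt_of_le hjK with rfl | hjK'
        · rw [rhoProd_self]
        · have hnb : ¬ Binding ρ n κ j := by
            intro hb
            have hle : K ≤ j :=
              Nat.sInf_le (show j ∈ {k | Binding ρ n κ k ∧ i ≤ k} from ⟨hb, hij⟩)
            omega
          unfold Binding at hnb
          push_neg at hnb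
          obtain ⟨j', hj'1, hj'2, hj'3⟩ := hnb (by omega) (by omega)
          by_cases hc : j' ≤ K
          · have h1 : 1 ≤ rhoProd ρ j' K := ih j' (by omega) hc (by omega)
            rw [← rhoProd_mul ρ j j' K (by omega) hc]
            nlinarith [rhoProd_pos' n ρ hρ j j' (by omega)]
          · have hKj' : rhoProd ρ K j' < 1 := hKlt j' (by omega) hj'2
            have heq : rhoProd ρ j K * rhoProd ρ K j' = rhoProd ρ j j' :=
              rhoProd_mul ρ j K j' (by omega) (by omega)
            have hp1 : 0 < rhoProd ρ j K := rhoProd_pos' n ρ hρ j K (by omega)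
            have hp2 : 0 < rhoProd ρ K j' := rhoProd_pos' n ρ hρ K j' (by omega)
            nlinarith
    have hPpos : 0 < rhoProd ρ i K := rhoProd_pos' n ρ hρ i K (by omega)
    have key : ρ (i + 1) ≤ rhoProd ρ i K := by
      rcases eq_or_lt_of_le hiK with heq | hiK'
      · have h1 : rhoProd ρ K (i + 1) < 1 := hKlt (i + 1) (by omega) (by omega)
        rw [← heq] at h1
        have h2 : rhoProd ρ i (i + 1) = ρ (i + 1) := by simp [rhoProd]
        rw [← heq, rhoProd_self]
        linarith [h2 ▸ h1]
      · have h1 : 1 ≤ rhoProd ρ (i + 1) K := claim K (i + 1) (by omega) (by omega) (by omega)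
        have h2 : rhoProd ρ i (i + 1) * rhoProd ρ (i + 1) K = rhoProd ρ i K :=
          rhoProd_mul ρ i (i + 1) K (by omega) (by omega)
        have h3 : rhoProd ρ i (i + 1) = ρ (i + 1) := by simp [rhoProd]
        have hρpos : 0 < ρ (i + 1) := hρ (i + 1) (by omega) (by omega)
        nlinarith
    calc (rhoProd ρ i K)⁻¹ * ρ (i + 1) ≤ (rhoProd ρ i K)⁻¹ * rhoProd ρ i K :=
          mul_le_mul_of_nonneg_left key (inv_nonneg.mpr hPpos.le)
      _ = 1 := inv_mul_cancel₀ hPpos.ne'
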